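/- arXiv:1604.01164 — 2 statements merged into one kernel-verified Lean document; each statement's English description precedes it below -/
import Mathlib

section
/- Let M be an n-maniplex and let {F_1, ..., F_k} be a chain of faces of M (i.e., pairwise comparable in the induced order, where an i-face and a j-face with i ≤ j are comparable iff they intersect). Then the intersection of the vertex sets of F_1, ..., F_k is non-empty. -/
/-- An `n`-maniplex on vertex (flag) set `V`: a nonempty, connected, properly
`n`-edge-coloured simple `n`-regular graph (encoded by the fixed-point-free
involutions `σ i` giving the unique `i`-neighbour of each vertex) such that the
2-factors of colours `i`, `j` with `|i - j| > 1` are 4-cycles. -/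
structure Maniplex (n : ℕ) (V : Type) where
  nonempty : Nonempty V
  σ : Fin n → V → V
  invol : ∀ i v, σ i (σ i v) = v
  nofix : ∀ i v, σ i v ≠ v
  conn : ∀ u v : V, Relation.ReflTransGen (fun x y => ∃ i, σ i x = y) u v
  comm : ∀ i j : Fin n, (i : ℕ) + 1 < (j : ℕ) → ∀ v,
    σ i (σ j v) = σ j (σ i v) ∧ σ i v ≠ σ j v

namespace Maniplex

variable {n : ℕ} {V : Type}

/-- There is a path from `u` to `v` using only edges with colours in `A`. -/
def ReachIn (M : Maniplex n V) (A : Set (Fin n)) (u v : V) : Prop :=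
  Relation.ReflTransGen (fun x y => ∃ i ∈ A, M.σ i x = y) u v

/-- The `i`-face of `M` containing `v`: the connected component of `v` in the
spanning subgraph with all edges of colour `i` deleted. -/
def face (M : Maniplex n V) (i : Fin n) (v : V) : Set V :=
  {u | M.ReachIn {j | j ≠ i} v u}

/-- `S` is an `i`-face of `M`. -/
def IsFace (M : Maniplex n V) (i : Fin n) (S : Set V) : Prop :=
  ∃ v, S = M.face i v

end Maniplex

/-!
Take a face `F` of least rank `i` in the chain and, by induction, a flag `v` lying in all the other
faces; among those let `G` have least rank `j`. If `j = i` then `F = G`. Otherwise pick `w ∈ F ∩ G`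
and a path from `w` to `v` avoiding colour `j`. Reading it backwards from `v`, steps of colour `< j`
are kept, while a step of colour `c > j` commutes with every colour `< j` and can be pushed to the
far end. This yields a flag `u` reached from `v` through colours `< j`, hence lying in every face
through `v` of rank `≥ j`, and reached from `w` avoiding colour `i`, hence lying in `F`.
-/

namespace Maniplex

variable {n : ℕ} {V : Type} (M : Maniplex n V)

theorem reachIn_symm {A : Set (Fin n)} {u v : V} (h : M.ReachIn A u v) : M.ReachIn A v u := by
  have : Std.Symm fun x y => ∃ i ∈ A, M.σ i x = y :=
    ⟨fun _ _ ⟨i, hi, hxy⟩ => ⟨i, hi, by rw [← hxy, M.invol]⟩⟩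
  exact Std.Symm.symm (r := Relation.ReflTransGen _) u v h

theorem reachIn_mono {A B : Set (Fin n)} (hAB : A ⊆ B) {u v : V} (h : M.ReachIn A u v) :
    M.ReachIn B u v :=
  Relation.ReflTransGen.mono (fun _ _ ⟨i, hi, hxy⟩ => ⟨i, hAB hi, hxy⟩) _ _ h

theorem sigma_commute {i j : Fin n} (hij : (i : ℕ) + 1 < j) :
    Function.Commute (M.σ i) (M.σ j) :=
  fun v => (M.comm i j hij v).1

theorem reachIn_sigma_of_commute {A : Set (Fin n)} {c : Fin n}
    (hA : ∀ d ∈ A, Function.Commute (M.σ d) (M.σ c)) {u v : V} (h : M.ReachIn A u v) :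
    M.ReachIn A (M.σ c u) (M.σ c v) :=
  Relation.ReflTransGen.lift (M.σ c)
    (fun _ _ ⟨d, hd, hxy⟩ => ⟨d, hd, by rw [hA d hd, hxy]⟩) _ _ h

theorem exists_reachIn_lt_of_reachIn_ne {i j : Fin n} (hij : i < j) {w v : V}
    (h : M.ReachIn {c | c ≠ j} w v) :
    ∃ u, M.ReachIn {c | c < j} v u ∧ M.ReachIn {c | c ≠ i} w u := by
  induction h with
  | refl => exact ⟨w, .refl, .refl⟩
  | @tail x y _ hxy ih =>
    obtain ⟨c, hcj, rfl⟩ := hxy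
    obtain ⟨u, hxu, hwu⟩ := ih
    rcases Ne.lt_or_gt hcj with hcj | hjc
    · exact ⟨u, .head ⟨c, hcj, M.invol c x⟩ hxu, hwu⟩
    · have hcomm : ∀ d ∈ {d : Fin n | d < j}, Function.Commute (M.σ d) (M.σ c) :=
        fun d (hdj : d < j) => M.sigma_commute (by omega)
      exact ⟨M.σ c u, M.reachIn_sigma_of_commute hcomm hxu,
        .tail hwu ⟨c, (hij.trans hjc).ne', rfl⟩⟩

variable {M}

theorem IsFace.reachIn_of_mem {i : Fin n} {S : Set V} (hS : M.IsFace i S) {v w : V}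
    (hv : v ∈ S) (hw : w ∈ S) : M.ReachIn {c | c ≠ i} v w := by
  obtain ⟨x, rfl⟩ := hS
  exact (M.reachIn_symm hv).trans hw

theorem IsFace.mem_of_reachIn {i : Fin n} {S : Set V} (hS : M.IsFace i S) {A : Set (Fin n)}
    (hA : i ∉ A) {v u : V} (hv : v ∈ S) (h : M.ReachIn A v u) : u ∈ S := by
  obtain ⟨x, rfl⟩ := hS
  exact hv.trans (M.reachIn_mono (fun c hc => ne_of_mem_of_not_mem hc hA) h)

theorem IsFace.eq_of_inter_nonempty {i : Fin n} {S T : Set V} (hS : M.IsFace i S)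
    (hT : M.IsFace i T) (h : (S ∩ T).Nonempty) : S = T := by
  obtain ⟨x, hxS, hxT⟩ := h
  ext u
  exact ⟨fun hu => hT.mem_of_reachIn (by simp) hxT (hS.reachIn_of_mem hxS hu),
    fun hu => hS.mem_of_reachIn (by simp) hxS (hT.reachIn_of_mem hxT hu)⟩

variable (M)

theorem exists_mem_faces_of_pairwise_inter {ι : Type*} (r : ι → Fin n) (S : ι → Set V)
    (hface : ∀ a, M.IsFace (r a) (S a)) (hchain : ∀ a b, (S a ∩ S b).Nonempty)
    (s : Finset ι) : ∃ u, ∀ a ∈ s, u ∈ S a := by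
  classical
  induction s using Finset.induction_on_min_value r with
  | empty => exact ⟨M.nonempty.some, by simp⟩
  | insert a s _ hmin ih =>
    obtain ⟨v, hv⟩ := ih
    suffices ∃ u ∈ S a, ∀ x ∈ s, u ∈ S x by
      obtain ⟨u, hua, hus⟩ := this
      exact ⟨u, Finset.forall_mem_insert _ _ _ |>.2 ⟨hua, hus⟩⟩
    rcases s.eq_empty_or_nonempty with rfl | hs
    · obtain ⟨u, hu, -⟩ := hchain a a
      exact ⟨u, hu, by simp⟩
    obtain ⟨b, hb, hbmin⟩ := s.exists_min_image r hs
    rcases (hmin b hb).eq_or_lt with hab | hab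
    · have hSab : S a = S b :=
        (hface a).eq_of_inter_nonempty (hab ▸ hface b) (hchain a b)
      exact ⟨v, hSab ▸ hv b hb, hv⟩
    · obtain ⟨w, hwa, hwb⟩ := hchain a b
      obtain ⟨u, hvu, hwu⟩ := M.exists_reachIn_lt_of_reachIn_ne hab
        ((hface b).reachIn_of_mem hwb (hv b hb))
      refine ⟨u, (hface a).mem_of_reachIn (by simp) hwa hwu, fun x hx => ?_⟩
      exact (hface x).mem_of_reachIn (not_lt.2 (hbmin x hx) : ¬ r x < r b) (hv x hx) hvu

end Maniplex

/-- A family of faces `S a` of ranks `r a` forms a chain iff the faces pairwise intersect. -/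
theorem chain_inter_nonempty {n : ℕ} {V : Type} (M : Maniplex n V)
    (k : ℕ) (r : Fin k → Fin n) (S : Fin k → Set V)
    (hface : ∀ a, M.IsFace (r a) (S a))
    (hchain : ∀ a b, (S a ∩ S b).Nonempty) :
    (⋂ a, S a).Nonempty := by
  obtain ⟨u, hu⟩ := M.exists_mem_faces_of_pairwise_inter r S hface hchain Finset.univ
  exact ⟨u, Set.mem_iInter.2 fun a => hu a (Finset.mem_univ a)⟩
end

section
/- Let M be an n-maniplex with the component intersection property (CIP): for every chain of faces {G_1,...,G_k} the intersection ∩ G_j (as a subgraph of M) is connected. Then the induced poset P_M satisfies the diamond condition: for every i in [n] and faces E < F of ranks i−1 and i+1, there are exactly two i-faces H with E < H < F. -/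
namespace Maniplex

variable {n : ℕ} {V : Type}

/-- The type of (proper) faces of a maniplex: a rank together with a face of that rank. -/
def FaceT (M : Maniplex n V) : Type := {F : Fin n × Set V // M.IsFace F.1 F.2}

/-- The order on faces: `F ≤ G` iff `rank F ≤ rank G` and `F ∩ G ≠ ∅`. -/
def faceLe (M : Maniplex n V) (F G : M.FaceT) : Prop :=
  F.1.1 ≤ G.1.1 ∧ (F.1.2 ∩ G.1.2).Nonempty

/-- The faces of `M` together with adjoined minimum `none` and maximum `some none`. -/
def PFace (M : Maniplex n V) : Type := Option (Option M.FaceT)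

/-- The order on `P_M` (with the improper minimum and maximum adjoined). -/
def ple (M : Maniplex n V) : M.PFace → M.PFace → Prop
  | none, _ => True
  | _, some none => True
  | some (some F), some (some G) => M.faceLe F G
  | _, _ => False

/-- The rank function of `P_M`. -/
def prank (M : Maniplex n V) : M.PFace → ℤ
  | none => -1
  | some none => (n : ℤ)
  | some (some F) => ((F.1.1 : ℕ) : ℤ)

/-- The component intersection property: for every chain of faces, the
intersection of the faces is a connected subgraph of `M`. -/
def CIP (M : Maniplex n V) : Prop :=
  ∀ (k : ℕ) (r : Fin k → Fin n) (S : Fin k → Set V),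
    (∀ a, M.IsFace (r a) (S a)) →
    (∀ a b, (S a ∩ S b).Nonempty) →
    ∀ u v : V, (∀ a, u ∈ S a) → (∀ a, v ∈ S a) →
      M.ReachIn {c | ∀ a, c ≠ r a} u v

/-- The diamond condition for the poset `P_M`. -/
def Diamond (M : Maniplex n V) : Prop :=
  ∀ (i : Fin n) (E F : M.PFace), M.ple E F →
    M.prank E = ((i : ℕ) : ℤ) - 1 → M.prank F = ((i : ℕ) : ℤ) + 1 →
    ∃ H₁ H₂ : M.PFace, H₁ ≠ H₂ ∧
      ∀ H : M.PFace,
        (M.prank H = ((i : ℕ) : ℤ) ∧ M.ple E H ∧ M.ple H F) ↔ (H = H₁ ∨ H = H₂)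

/-- A maximal chain of proper faces of `P_M`: one face of each rank,
pairwise incident. -/
def IsFlag (M : Maniplex n V) (S : Fin n → Set V) : Prop :=
  (∀ i, M.IsFace i (S i)) ∧ ∀ i j, ((S i) ∩ (S j)).Nonempty

/-- `P_M` is faithful: every maximal chain of proper faces has a unique common vertex. -/
def Faithful (M : Maniplex n V) : Prop :=
  ∀ S : Fin n → Set V, M.IsFlag S → ∃! v : V, ∀ i, v ∈ S i

/-- Strong flag connectivity of `P_M`: any two maximal chains `Φ`, `Ψ` are joined
by a sequence of successively adjacent maximal chains all containing `Φ ∩ Ψ`. -/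
def SFC (M : Maniplex n V) : Prop :=
  ∀ Φ Ψ : Fin n → Set V, M.IsFlag Φ → M.IsFlag Ψ →
    Relation.ReflTransGen
      (fun X Y => M.IsFlag Y ∧ (∃ j, X j ≠ Y j ∧ ∀ l, l ≠ j → X l = Y l) ∧
        ∀ i, Φ i = Ψ i → Y i = Φ i) Φ Ψ

/-- The strong path intersection property. -/
def SPIP (M : Maniplex n V) : Prop :=
  ∀ (A B : Set (Fin n)) (u v : V),
    M.ReachIn A u v → M.ReachIn B u v → M.ReachIn (A ∩ B) u v

/-- The weak path intersection property. -/
def WPIP (M : Maniplex n V) : Prop :=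
  ∀ i j : Fin n, i < j → ∀ u v : V,
    M.ReachIn {c | i < c} u v → M.ReachIn {c | c < j} u v →
    M.ReachIn {c | i < c ∧ c < j} u v

end Maniplex

namespace Maniplex

variable {n : ℕ} {V : Type}

lemma ReachIn.mono' {M : Maniplex n V} {A B : Set (Fin n)} (hAB : A ⊆ B) {u v : V}
    (h : M.ReachIn A u v) : M.ReachIn B u v := by
  induction h with
  | refl => exact Relation.ReflTransGen.refl
  | tail _ hstep ih =>
      obtain ⟨c, hc, hs⟩ := hstep
      exact ih.tail ⟨c, hAB hc, hs⟩

lemma ReachIn.symm' {M : Maniplex n V} {A : Set (Fin n)} {u v : V}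
    (h : M.ReachIn A u v) : M.ReachIn A v u := by
  induction h with
  | refl => exact Relation.ReflTransGen.refl
  | tail _ hstep ih =>
      obtain ⟨c, hc, hs⟩ := hstep
      exact Relation.ReflTransGen.head ⟨c, hc, by rw [← hs, M.invol]⟩ ih

lemma mem_face_self (M : Maniplex n V) (i : Fin n) (v : V) : v ∈ M.face i v :=
  Relation.ReflTransGen.refl

lemma reach_of_mem_face {M : Maniplex n V} {i : Fin n} {v u : V}
    (h : u ∈ M.face i v) : M.ReachIn {j | j ≠ i} v u := h

lemma mem_face_of_reach {M : Maniplex n V} {i : Fin n} {v u : V}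
    (h : M.ReachIn {j | j ≠ i} v u) : u ∈ M.face i v := h

lemma face_eq_of_mem {M : Maniplex n V} {i : Fin n} {v u : V}
    (h : u ∈ M.face i v) : M.face i u = M.face i v := by
  ext w
  constructor
  · intro hw
    exact mem_face_of_reach (Relation.ReflTransGen.trans (reach_of_mem_face h)
      (reach_of_mem_face hw))
  · intro hw
    exact mem_face_of_reach (Relation.ReflTransGen.trans
      (ReachIn.symm' (reach_of_mem_face h)) (reach_of_mem_face hw))

lemma mem_face_step {M : Maniplex n V} {i j : Fin n} {v u : V}
    (h : u ∈ M.face i v) (hj : j ≠ i) : M.σ j u ∈ M.face i v :=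
  Relation.ReflTransGen.tail h ⟨j, hj, rfl⟩

lemma eq_of_reach_empty {M : Maniplex n V} {A : Set (Fin n)} (hA : ∀ c, c ∉ A)
    {u v : V} (h : M.ReachIn A u v) : u = v := by
  induction h with
  | refl => rfl
  | tail _ hstep _ => obtain ⟨c, hc, _⟩ := hstep; exact absurd hc (hA c)

lemma ReachIn.conj {M : Maniplex n V} {A : Set (Fin n)} {c : Fin n}
    (hcomm : ∀ a ∈ A, ∀ x, M.σ a (M.σ c x) = M.σ c (M.σ a x))
    {u v : V} (h : M.ReachIn A u v) : M.ReachIn A (M.σ c u) (M.σ c v) := by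
  induction h with
  | refl => exact Relation.ReflTransGen.refl
  | tail _ hstep ih =>
      obtain ⟨a, ha, hs⟩ := hstep
      exact ih.tail ⟨a, ha, by rw [hcomm a ha, hs]⟩

lemma ReachIn.split {M : Maniplex n V} {A B : Set (Fin n)}
    (hcomm : ∀ a ∈ A, ∀ b ∈ B, ∀ x, M.σ a (M.σ b x) = M.σ b (M.σ a x))
    {u w : V} (h : M.ReachIn (A ∪ B) u w) :
    ∃ z, M.ReachIn A u z ∧ M.ReachIn B z w := by
  induction h using Relation.ReflTransGen.head_induction_on with
  | refl => exact ⟨w, Relation.ReflTransGen.refl, Relation.ReflTransGen.refl⟩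
  | head hstep _ ih =>
      obtain ⟨z, hz1, hz2⟩ := ih
      obtain ⟨c, hc, hs⟩ := hstep
      rcases hc with hc | hc
      · exact ⟨z, Relation.ReflTransGen.head ⟨c, hc, hs⟩ hz1, hz2⟩
      · refine ⟨M.σ c z, ?_, ?_⟩
        · have hconj := ReachIn.conj (c := c) (fun a ha x => hcomm a ha c hc x) hz1
          rw [← hs, M.invol] at hconj
          exact hconj
        · exact Relation.ReflTransGen.head ⟨c, hc, M.invol c z⟩ hz2

lemma reach_single {M : Maniplex n V} {i : Fin n} {u z : V}
    (h : M.ReachIn {i} u z) : z = u ∨ z = M.σ i u := by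
  induction h with
  | refl => exact Or.inl rfl
  | tail _ hstep ih =>
      obtain ⟨c, hc, hs⟩ := hstep
      have hcc : c = i := hc
      subst hcc
      rcases ih with h1 | h1
      · right; rw [← hs, h1]
      · left; rw [← hs, h1, M.invol]

/-- If `z` can be reached from `v` using only colour `i` and colours at distance
at least 2 from `i`, then the `i`-face of `z` is that of `v` or of `σ i v`. -/
lemma face_dichotomy {M : Maniplex n V} {i : Fin n} {v z : V}
    (h : M.ReachIn {c | c = i ∨ (c : ℕ) + 1 < (i : ℕ) ∨ (i : ℕ) + 1 < (c : ℕ)} v z) :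
    M.face i z = M.face i v ∨ M.face i z = M.face i (M.σ i v) := by
  have hsub : {c : Fin n | c = i ∨ (c : ℕ) + 1 < (i : ℕ) ∨ (i : ℕ) + 1 < (c : ℕ)} ⊆
      ({i} : Set (Fin n)) ∪ {c | (c : ℕ) + 1 < (i : ℕ) ∨ (i : ℕ) + 1 < (c : ℕ)} := by
    intro c hc
    rcases hc with hc | hc
    · exact Or.inl hc
    · exact Or.inr hc
  have hcomm : ∀ a ∈ ({i} : Set (Fin n)),
      ∀ b ∈ {c : Fin n | (c : ℕ) + 1 < (i : ℕ) ∨ (i : ℕ) + 1 < (c : ℕ)},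
      ∀ x, M.σ a (M.σ b x) = M.σ b (M.σ a x) := by
    intro a ha b hb x
    have ha' : a = i := ha
    subst ha'
    rcases hb with hb | hb
    · exact ((M.comm b a hb x).1).symm
    · exact (M.comm a b hb x).1
  obtain ⟨z', hz1, hz2⟩ := ReachIn.split hcomm (h.mono' hsub)
  have hz2' : M.ReachIn {j | j ≠ i} z' z := by
    refine hz2.mono' ?_
    intro c hc
    have hcv : (c : ℕ) ≠ (i : ℕ) := by
      rcases hc with hc | hc <;> omega
    exact fun hh => hcv (by rw [hh])
  rcases reach_single hz1 with h1 | h1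
  · subst h1
    exact Or.inl (face_eq_of_mem (mem_face_of_reach hz2'))
  · subst h1
    exact Or.inr (face_eq_of_mem (mem_face_of_reach hz2'))

/-- Distinctness of the two candidate faces, via CIP applied to the chain of
all faces of `v`. -/
lemma face_ne_sigma (M : Maniplex n V) (hC : M.CIP) (i : Fin n) (v : V) :
    M.face i v ≠ M.face i (M.σ i v) := by
  intro heq
  have hmem : M.σ i v ∈ M.face i v := by
    rw [heq]; exact M.mem_face_self i (M.σ i v)
  have hreach := hC n (fun a => a) (fun j => M.face j v)
    (fun a => ⟨v, rfl⟩)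
    (fun a b => ⟨v, M.mem_face_self _ _, M.mem_face_self _ _⟩)
    v (M.σ i v) (fun a => M.mem_face_self _ _)
    (fun a => by
      by_cases hai : a = i
      · subst hai; exact hmem
      · exact M.mem_face_step (M.mem_face_self _ _) (fun hh => hai hh.symm))
  have heq2 := eq_of_reach_empty (fun c hc => (hc : ∀ a, c ≠ a) c rfl) hreach
  exact M.nofix i v heq2.symm

/-- The key consequence of CIP: if `v` and `z` both lie in all faces of a chain
whose ranks cover all colours at distance exactly 1 from `i`, then the `i`-face
of `z` is the `i`-face of `v` or of `σ i v`. -/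
lemma key (M : Maniplex n V) (hC : M.CIP) (i : Fin n) (v z : V)
    (k : ℕ) (r : Fin k → Fin n) (S : Fin k → Set V)
    (hS : ∀ a, M.IsFace (r a) (S a))
    (hcover : ∀ c : Fin n, (∀ a, c ≠ r a) →
      c = i ∨ (c : ℕ) + 1 < (i : ℕ) ∨ (i : ℕ) + 1 < (c : ℕ))
    (hv : ∀ a, v ∈ S a) (hz : ∀ a, z ∈ S a) :
    M.face i z = M.face i v ∨ M.face i z = M.face i (M.σ i v) := by
  have hreach := hC k r S hS (fun a b => ⟨v, hv a, hv b⟩) v z hv hz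
  exact face_dichotomy (hreach.mono' hcover)

end Maniplex

/-- If a maniplex has the component intersection property, then its induced
poset `P_M` satisfies the diamond condition. -/
theorem cip_implies_diamond {n : ℕ} {V : Type} (M : Maniplex n V)
    (h : M.CIP) : M.Diamond := by
  intro i E F hEF hE hF
  have hin : (i : ℕ) < n := i.isLt
  -- the sets {c > i} and {c < i} commute elementwise
  have hcommLR : ∀ a ∈ {c : Fin n | (i : ℕ) < (c : ℕ)},
      ∀ b ∈ {c : Fin n | (c : ℕ) < (i : ℕ)},
      ∀ x, M.σ a (M.σ b x) = M.σ b (M.σ a x) := by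
    intro a ha b hb x
    have ha' : (i : ℕ) < (a : ℕ) := ha
    have hb' : (b : ℕ) < (i : ℕ) := hb
    exact ((M.comm b a (by omega) x).1).symm
  rcases F with _ | (_ | F')
  · -- F = ⊥ : impossible, rank -1 = i+1
    simp only [Maniplex.prank] at hF; omega
  · -- F = ⊤ : n = i + 1
    simp only [Maniplex.prank] at hF
    rcases E with _ | (_ | E')
    · -- Case 4 : E = ⊥, F = ⊤, so n = 1, i = 0
      simp only [Maniplex.prank] at hE
      obtain ⟨v⟩ := M.nonempty
      refine ⟨some (some ⟨(i, M.face i v), ⟨v, rfl⟩⟩),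
        some (some ⟨(i, M.face i (M.σ i v)), ⟨M.σ i v, rfl⟩⟩), ?_, ?_⟩
      · intro hcon
        have h12 := Option.some.inj (Option.some.inj hcon)
        exact Maniplex.face_ne_sigma M h i v (congrArg (fun x => x.1.2) h12)
      · intro H
        constructor
        · rintro ⟨hrH, hEH, hHF⟩
          rcases H with _ | (_ | H')
          · simp only [Maniplex.prank] at hrH; omega
          · simp only [Maniplex.prank] at hrH; omega
          · simp only [Maniplex.prank] at hrH
            have hrH' : H'.1.1 = i := Fin.ext (by omega)
            obtain ⟨u0, hHf⟩ := H'.2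
            have hSH : H'.1.2 = M.face i u0 := by rw [hHf, hrH']
            have hkey := M.key h i v u0 0 Fin.elim0 Fin.elim0
              (fun a => a.elim0)
              (fun c _ => by
                left
                refine Fin.ext ?_
                have hc := c.isLt
                omega)
              (fun a => a.elim0) (fun a => a.elim0)
            rcases hkey with hk | hk
            · left
              have h2 : H'.1.2 = M.face i v := by rw [hSH, ← hk]
              have hpe : H'.1 = (H'.1.1, H'.1.2) := rfl
              have h1 : H'.1 = (i, M.face i v) := by rw [hpe, hrH', h2]
              exact congrArg _ (congrArg _ (Subtype.ext h1))
            · right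
              have h2 : H'.1.2 = M.face i (M.σ i v) := by rw [hSH, ← hk]
              have hpe : H'.1 = (H'.1.1, H'.1.2) := rfl
              have h1 : H'.1 = (i, M.face i (M.σ i v)) := by rw [hpe, hrH', h2]
              exact congrArg _ (congrArg _ (Subtype.ext h1))
        · rintro (rfl | rfl)
          · exact ⟨rfl, trivial, trivial⟩
          · exact ⟨rfl, trivial, trivial⟩
    · -- E = ⊤ : impossible
      simp only [Maniplex.prank] at hE; omega
    · -- Case 3 : E proper, F = ⊤ (n = i + 1)
      simp only [Maniplex.prank] at hE
      have hrE : (E'.1.1 : ℕ) + 1 = (i : ℕ) := by omega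
      obtain ⟨e, hEf⟩ := E'.2
      have hvE : e ∈ E'.1.2 := by rw [hEf]; exact M.mem_face_self _ _
      set v := e with hv
      refine ⟨some (some ⟨(i, M.face i v), ⟨v, rfl⟩⟩),
        some (some ⟨(i, M.face i (M.σ i v)), ⟨M.σ i v, rfl⟩⟩), ?_, ?_⟩
      · intro hcon
        have h12 := Option.some.inj (Option.some.inj hcon)
        exact Maniplex.face_ne_sigma M h i v (congrArg (fun x => x.1.2) h12)
      · intro H
        constructor
        · rintro ⟨hrH, hEH, hHF⟩
          rcases H with _ | (_ | H')
          · simp only [Maniplex.prank] at hrH; omega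
          · simp only [Maniplex.prank] at hrH; omega
          · simp only [Maniplex.prank] at hrH
            have hrH' : H'.1.1 = i := Fin.ext (by omega)
            obtain ⟨u0, hHf⟩ := H'.2
            have hSH : H'.1.2 = M.face i u0 := by rw [hHf, hrH']
            have hEH' : M.faceLe E' H' := hEH
            obtain ⟨-, u, huE, huH⟩ := hEH'
            rw [hSH] at huH
            have hkey := M.key h i v u 1 ![E'.1.1] ![E'.1.2]
              (fun a => by fin_cases a <;> simpa using E'.2)
              (fun c hc => by
                have h0 : c ≠ E'.1.1 := by simpa using hc 0
                have h0' : (c : ℕ) ≠ (E'.1.1 : ℕ) := fun hh => h0 (Fin.ext hh)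
                by_cases hci : c = i
                · exact Or.inl hci
                · have hci' : (c : ℕ) ≠ (i : ℕ) := fun hh => hci (Fin.ext hh)
                  have hc2 := c.isLt
                  right; omega)
              (fun a => by fin_cases a <;> simpa using hvE)
              (fun a => by fin_cases a <;> simpa using huE)
            have hfz : H'.1.2 = M.face i u := by
              rw [hSH]; exact (Maniplex.face_eq_of_mem huH).symm
            rcases hkey with hk | hk
            · left
              have h2 : H'.1.2 = M.face i v := by rw [hfz, hk]
              have hpe : H'.1 = (H'.1.1, H'.1.2) := rfl
              have h1 : H'.1 = (i, M.face i v) := by rw [hpe, hrH', h2]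
              exact congrArg _ (congrArg _ (Subtype.ext h1))
            · right
              have h2 : H'.1.2 = M.face i (M.σ i v) := by rw [hfz, hk]
              have hpe : H'.1 = (H'.1.1, H'.1.2) := rfl
              have h1 : H'.1 = (i, M.face i (M.σ i v)) := by rw [hpe, hrH', h2]
              exact congrArg _ (congrArg _ (Subtype.ext h1))
        · have hvE' : M.σ i v ∈ E'.1.2 := by
            rw [hEf]
            exact M.mem_face_step (M.mem_face_self _ _)
              (fun hh => by have := congrArg Fin.val hh; omega)
          rintro (rfl | rfl)
          · refine ⟨rfl, ?_, trivial⟩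
            exact (⟨Fin.le_def.mpr (by omega : (E'.1.1 : ℕ) ≤ (i : ℕ)), v, hvE, M.mem_face_self i v⟩ :
              M.faceLe E' ⟨(i, M.face i v), ⟨v, rfl⟩⟩)
          · refine ⟨rfl, ?_, trivial⟩
            exact (⟨Fin.le_def.mpr (by omega : (E'.1.1 : ℕ) ≤ (i : ℕ)), M.σ i v, hvE',
              M.mem_face_self i (M.σ i v)⟩ :
              M.faceLe E' ⟨(i, M.face i (M.σ i v)), ⟨M.σ i v, rfl⟩⟩)
  · -- F proper
    simp only [Maniplex.prank] at hF
    have hrF : (F'.1.1 : ℕ) = (i : ℕ) + 1 := by omega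
    obtain ⟨f, hFf⟩ := F'.2
    rcases E with _ | (_ | E')
    · -- Case 2 : E = ⊥ (i = 0), F proper
      simp only [Maniplex.prank] at hE
      have hi0 : (i : ℕ) = 0 := by omega
      have hvF : f ∈ F'.1.2 := by rw [hFf]; exact M.mem_face_self _ _
      set v := f with hv
      refine ⟨some (some ⟨(i, M.face i v), ⟨v, rfl⟩⟩),
        some (some ⟨(i, M.face i (M.σ i v)), ⟨M.σ i v, rfl⟩⟩), ?_, ?_⟩
      · intro hcon
        have h12 := Option.some.inj (Option.some.inj hcon)
        exact Maniplex.face_ne_sigma M h i v (congrArg (fun x => x.1.2) h12)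
      · intro H
        constructor
        · rintro ⟨hrH, hEH, hHF⟩
          rcases H with _ | (_ | H')
          · simp only [Maniplex.prank] at hrH; omega
          · simp only [Maniplex.prank] at hrH; omega
          · simp only [Maniplex.prank] at hrH
            have hrH' : H'.1.1 = i := Fin.ext (by omega)
            obtain ⟨u0, hHf⟩ := H'.2
            have hSH : H'.1.2 = M.face i u0 := by rw [hHf, hrH']
            have hHF' : M.faceLe H' F' := hHF
            obtain ⟨-, w, hwH, hwF⟩ := hHF'
            rw [hSH] at hwH
            have hkey := M.key h i v w 1 ![F'.1.1] ![F'.1.2]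
              (fun a => by fin_cases a <;> simpa using F'.2)
              (fun c hc => by
                have h0 : c ≠ F'.1.1 := by simpa using hc 0
                have h0' : (c : ℕ) ≠ (F'.1.1 : ℕ) := fun hh => h0 (Fin.ext hh)
                by_cases hci : c = i
                · exact Or.inl hci
                · have hci' : (c : ℕ) ≠ (i : ℕ) := fun hh => hci (Fin.ext hh)
                  right; omega)
              (fun a => by fin_cases a <;> simpa using hvF)
              (fun a => by fin_cases a <;> simpa using hwF)
            have hfz : H'.1.2 = M.face i w := by
              rw [hSH]; exact (Maniplex.face_eq_of_mem hwH).symm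
            rcases hkey with hk | hk
            · left
              have h2 : H'.1.2 = M.face i v := by rw [hfz, hk]
              have hpe : H'.1 = (H'.1.1, H'.1.2) := rfl
              have h1 : H'.1 = (i, M.face i v) := by rw [hpe, hrH', h2]
              exact congrArg _ (congrArg _ (Subtype.ext h1))
            · right
              have h2 : H'.1.2 = M.face i (M.σ i v) := by rw [hfz, hk]
              have hpe : H'.1 = (H'.1.1, H'.1.2) := rfl
              have h1 : H'.1 = (i, M.face i (M.σ i v)) := by rw [hpe, hrH', h2]
              exact congrArg _ (congrArg _ (Subtype.ext h1))
        · have hvF' : M.σ i v ∈ F'.1.2 := by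
            rw [hFf]
            exact M.mem_face_step (M.mem_face_self _ _)
              (fun hh => by have := congrArg Fin.val hh; omega)
          rintro (rfl | rfl)
          · refine ⟨rfl, trivial, ?_⟩
            exact (⟨Fin.le_def.mpr (by omega : (i : ℕ) ≤ (F'.1.1 : ℕ)), v, M.mem_face_self i v, hvF⟩ :
              M.faceLe ⟨(i, M.face i v), ⟨v, rfl⟩⟩ F')
          · refine ⟨rfl, trivial, ?_⟩
            exact (⟨Fin.le_def.mpr (by omega : (i : ℕ) ≤ (F'.1.1 : ℕ)), M.σ i v,
              M.mem_face_self i (M.σ i v), hvF'⟩ :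
              M.faceLe ⟨(i, M.face i (M.σ i v)), ⟨M.σ i v, rfl⟩⟩ F')
    · -- E = ⊤ : impossible
      simp only [Maniplex.prank] at hE; omega
    · -- Case 1 : both E and F proper
      simp only [Maniplex.prank] at hE
      have hrE : (E'.1.1 : ℕ) + 1 = (i : ℕ) := by omega
      obtain ⟨e, hEf⟩ := E'.2
      have hEF' : M.faceLe E' F' := hEF
      obtain ⟨-, v, hvE, hvF⟩ := hEF'
      refine ⟨some (some ⟨(i, M.face i v), ⟨v, rfl⟩⟩),
        some (some ⟨(i, M.face i (M.σ i v)), ⟨M.σ i v, rfl⟩⟩), ?_, ?_⟩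
      · intro hcon
        have h12 := Option.some.inj (Option.some.inj hcon)
        exact Maniplex.face_ne_sigma M h i v (congrArg (fun x => x.1.2) h12)
      · intro H
        constructor
        · rintro ⟨hrH, hEH, hHF⟩
          rcases H with _ | (_ | H')
          · simp only [Maniplex.prank] at hrH; omega
          · simp only [Maniplex.prank] at hrH; omega
          · simp only [Maniplex.prank] at hrH
            have hrH' : H'.1.1 = i := Fin.ext (by omega)
            obtain ⟨u0, hHf⟩ := H'.2
            have hSH : H'.1.2 = M.face i u0 := by rw [hHf, hrH']
            have hEH' : M.faceLe E' H' := hEH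
            have hHF' : M.faceLe H' F' := hHF
            obtain ⟨-, u, huE, huH⟩ := hEH'
            obtain ⟨-, w, hwH, hwF⟩ := hHF'
            rw [hSH] at huH hwH
            -- path from u to w inside H avoiding colour i
            have huw : M.ReachIn {j | j ≠ i} u w :=
              Relation.ReflTransGen.trans
                (Maniplex.ReachIn.symm' (Maniplex.reach_of_mem_face huH)) (Maniplex.reach_of_mem_face hwH)
            obtain ⟨z, hz1, hz2⟩ := Maniplex.ReachIn.split hcommLR (huw.mono' (by
              intro c hc
              have hc' : c ≠ i := hc
              have hcv : (c : ℕ) ≠ (i : ℕ) := fun hh => hc' (Fin.ext hh)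
              rcases Nat.lt_or_ge (i : ℕ) (c : ℕ) with h1 | h1
              · exact Or.inl h1
              · exact Or.inr (by
                  show (c : ℕ) < (i : ℕ)
                  omega)))
            have hz1' : M.ReachIn {c : Fin n | (i : ℕ) < (c : ℕ)} u z := hz1
            have hz2' : M.ReachIn {c : Fin n | (c : ℕ) < (i : ℕ)} z w := hz2
            -- z lies in E', F' and H
            have hzE : z ∈ E'.1.2 := by
              rw [hEf]
              rw [hEf] at huE
              refine Maniplex.mem_face_of_reach (Relation.ReflTransGen.trans
                (Maniplex.reach_of_mem_face huE) (hz1'.mono' ?_))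
              intro c hc hh
              have hc' : (i : ℕ) < (c : ℕ) := hc
              have := congrArg Fin.val hh
              omega
            have hzF : z ∈ F'.1.2 := by
              rw [hFf]
              rw [hFf] at hwF
              refine Maniplex.mem_face_of_reach (Relation.ReflTransGen.trans
                (Maniplex.reach_of_mem_face hwF) ((Maniplex.ReachIn.symm' hz2').mono' ?_))
              intro c hc hh
              have hc' : (c : ℕ) < (i : ℕ) := hc
              have := congrArg Fin.val hh
              omega
            have hzH : z ∈ M.face i u0 := by
              refine Maniplex.mem_face_of_reach (Relation.ReflTransGen.trans
                (Maniplex.reach_of_mem_face huH) (hz1'.mono' ?_))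
              intro c hc hh
              have hc' : (i : ℕ) < (c : ℕ) := hc
              have := congrArg Fin.val hh
              omega
            have hkey := M.key h i v z 2 ![E'.1.1, F'.1.1] ![E'.1.2, F'.1.2]
              (fun a => by fin_cases a <;> simp <;> [exact E'.2; exact F'.2])
              (fun c hc => by
                have h0 : c ≠ E'.1.1 := by simpa using hc 0
                have h1 : c ≠ F'.1.1 := by simpa using hc 1
                have h0' : (c : ℕ) ≠ (E'.1.1 : ℕ) := fun hh => h0 (Fin.ext hh)
                have h1' : (c : ℕ) ≠ (F'.1.1 : ℕ) := fun hh => h1 (Fin.ext hh)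
                by_cases hci : c = i
                · exact Or.inl hci
                · have hci' : (c : ℕ) ≠ (i : ℕ) := fun hh => hci (Fin.ext hh)
                  right; omega)
              (fun a => by fin_cases a <;> simp <;> [exact hvE; exact hvF])
              (fun a => by fin_cases a <;> simp <;> [exact hzE; exact hzF])
            have hfz : H'.1.2 = M.face i z := by
              rw [hSH]; exact (Maniplex.face_eq_of_mem hzH).symm
            rcases hkey with hk | hk
            · left
              have h2 : H'.1.2 = M.face i v := by rw [hfz, hk]
              have hpe : H'.1 = (H'.1.1, H'.1.2) := rfl
              have h1 : H'.1 = (i, M.face i v) := by rw [hpe, hrH', h2]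
              exact congrArg _ (congrArg _ (Subtype.ext h1))
            · right
              have h2 : H'.1.2 = M.face i (M.σ i v) := by rw [hfz, hk]
              have hpe : H'.1 = (H'.1.1, H'.1.2) := rfl
              have h1 : H'.1 = (i, M.face i (M.σ i v)) := by rw [hpe, hrH', h2]
              exact congrArg _ (congrArg _ (Subtype.ext h1))
        · have hvE' : M.σ i v ∈ E'.1.2 := by
            rw [hEf]
            rw [hEf] at hvE
            exact M.mem_face_step hvE
              (fun hh => by have := congrArg Fin.val hh; omega)
          have hvF' : M.σ i v ∈ F'.1.2 := by
            rw [hFf]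
            rw [hFf] at hvF
            exact M.mem_face_step hvF
              (fun hh => by have := congrArg Fin.val hh; omega)
          rintro (rfl | rfl)
          · refine ⟨rfl, ?_, ?_⟩
            · exact (⟨Fin.le_def.mpr (by omega : (E'.1.1 : ℕ) ≤ (i : ℕ)), v, hvE, M.mem_face_self i v⟩ :
                M.faceLe E' ⟨(i, M.face i v), ⟨v, rfl⟩⟩)
            · exact (⟨Fin.le_def.mpr (by omega : (i : ℕ) ≤ (F'.1.1 : ℕ)), v, M.mem_face_self i v, hvF⟩ :
                M.faceLe ⟨(i, M.face i v), ⟨v, rfl⟩⟩ F')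
          · refine ⟨rfl, ?_, ?_⟩
            · exact (⟨Fin.le_def.mpr (by omega : (E'.1.1 : ℕ) ≤ (i : ℕ)), M.σ i v, hvE',
                M.mem_face_self i (M.σ i v)⟩ :
                M.faceLe E' ⟨(i, M.face i (M.σ i v)), ⟨M.σ i v, rfl⟩⟩)
            · exact (⟨Fin.le_def.mpr (by omega : (i : ℕ) ≤ (F'.1.1 : ℕ)), M.σ i v,
                M.mem_face_self i (M.σ i v), hvF'⟩ :
                M.faceLe ⟨(i, M.face i (M.σ i v)), ⟨M.σ i v, rfl⟩⟩ F')
end
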